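/- arXiv:1902.01029 — 2 statements merged into one kernel-verified Lean document; each statement's English description precedes it below -/
import Mathlib

section
/- Let Γ be a finite simple graph and let v be a vertex of Γ. Then the right-angled Coxeter group W_{D_vΓ} of the double of Γ over v is isomorphic to a subgroup of index two in the right-angled Coxeter group W_Γ. -/
open SimpleGraph

/-! ### Right-angled Coxeter groups -/

/-- The relators of the right-angled Coxeter group of a graph `G`: the square of each
generator, and a commuting relator `s * t * (t * s)⁻¹` for each edge of `G`. -/
def racgRels {V : Type} (G : SimpleGraph V) : Set (FreeGroup V) :=
  {r | (∃ s : V, r = FreeGroup.of s * FreeGroup.of s) ∨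
    (∃ s t : V, G.Adj s t ∧
      r = (FreeGroup.of s * FreeGroup.of t) * (FreeGroup.of t * FreeGroup.of s)⁻¹)}

/-- The right-angled Coxeter group of a graph. -/
abbrev RACG {V : Type} (G : SimpleGraph V) := PresentedGroup (racgRels G)

/-! ### The double of a graph over a vertex -/

/-- Vertices of the double of `G` over `v`: one vertex for each vertex of the link of `v`,
and a pair of vertices for each vertex outside the closed star of `v`. -/
def DoubleVert {V : Type} (G : SimpleGraph V) (v : V) : Type :=
  {u : V // G.Adj v u} ⊕ ({u : V // u ≠ v ∧ ¬ G.Adj v u} × Bool)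

namespace DoubleVert

/-- The projection of a vertex of the double to the original graph. -/
def toV {V : Type} {G : SimpleGraph V} {v : V} : DoubleVert G v → V :=
  Sum.elim Subtype.val fun p => p.1.1

/-- The copy (none for link vertices) in which a vertex of the double lives. -/
def copy {V : Type} {G : SimpleGraph V} {v : V} : DoubleVert G v → Option Bool :=
  Sum.elim (fun _ => none) fun p => some p.2

instance {V : Type} [Finite V] {G : SimpleGraph V} {v : V} : Finite (DoubleVert G v) := by
  unfold DoubleVert; infer_instance

end DoubleVert

/-- The double `D_v G` of a graph `G` over the vertex `v`: two copies of `G` minus the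
open star of `v`, glued along the link of `v`. -/
def Double {V : Type} (G : SimpleGraph V) (v : V) : SimpleGraph (DoubleVert G v) where
  Adj a b := G.Adj a.toV b.toV ∧ (a.copy = none ∨ b.copy = none ∨ a.copy = b.copy)
  symm := by
    constructor
    rintro a b ⟨h1, h2⟩
    refine ⟨h1.symm, ?_⟩
    tauto
  loopless := ⟨fun a h => G.loopless.irrefl _ h.1⟩

/-! ### Bundled finite graphs, doubling moves, and subdivisions -/

/-- A bundled finite simple graph. -/
structure FinGraph : Type 1 where
  V : Type
  finite : Finite V
  graph : SimpleGraph V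

attribute [instance] FinGraph.finite

/-- `H` is obtained from `G` by doubling over some vertex (up to isomorphism). -/
def DoubleMove (G H : FinGraph) : Prop :=
  ∃ v : G.V, Nonempty (H.graph ≃g Double G.graph v)

/-- `DoublingSeq n G H` : `H` is obtained from `G` by a sequence of `n` doubling moves. -/
inductive DoublingSeq : ℕ → FinGraph → FinGraph → Prop
  | refl (G : FinGraph) : DoublingSeq 0 G G
  | step {n : ℕ} {G G' G'' : FinGraph} :
      DoublingSeq n G G' → DoubleMove G' G'' → DoublingSeq (n + 1) G G''

/-- The graph obtained from `G` by subdividing the edge between `u` and `w`: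
the new vertex is `none`. -/
def subdivideEdge {V : Type} (G : SimpleGraph V) (u w : V) : SimpleGraph (Option V) where
  Adj a b :=
    match a, b with
    | some a, some b => G.Adj a b ∧ ¬(a = u ∧ b = w) ∧ ¬(a = w ∧ b = u)
    | some a, none => a = u ∨ a = w
    | none, some b => b = u ∨ b = w
    | none, none => False
  symm := by
    constructor
    rintro (_ | a) (_ | b) h
    · exact h
    · exact h
    · exact h
    · exact ⟨h.1.symm, fun hc => h.2.2 ⟨hc.2, hc.1⟩, fun hc => h.2.1 ⟨hc.2, hc.1⟩⟩
  loopless := by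
    constructor
    rintro (_ | a) h
    · exact h
    · exact G.loopless.irrefl a h.1

/-- One subdivision step between bundled graphs. -/
def SubdivStep (G H : FinGraph) : Prop :=
  ∃ u w : G.V, G.graph.Adj u w ∧ Nonempty (H.graph ≃g subdivideEdge G.graph u w)

/-- `G` is obtained from `H` by a finite (possibly empty) sequence of edge subdivisions. -/
def IsSubdivisionOf (H G : FinGraph) : Prop := Relation.ReflTransGen SubdivStep H G

/-- The complete bipartite graph `K_{3,3}` as a bundled graph. -/
def K33Graph : FinGraph := ⟨Fin 3 ⊕ Fin 3, inferInstance, completeBipartiteGraph (Fin 3) (Fin 3)⟩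

/-- The complete graph `K_5` as a bundled graph. -/
def K5Graph : FinGraph := ⟨Fin 5, inferInstance, completeGraph (Fin 5)⟩

/-- The subgraph `Λ` of `G` is (isomorphic to) a subdivision of the bundled graph `H`. -/
def IsSubdivCopy (H : FinGraph) {V : Type} (G : SimpleGraph V) (Λ : G.Subgraph) : Prop :=
  ∃ H' : FinGraph, IsSubdivisionOf H H' ∧ Nonempty (H'.graph ≃g Λ.coe)

/-- `G` contains a subgraph which is a subdivision of `H`. -/
def ContainsSubdivOf (H : FinGraph) {V : Type} (G : SimpleGraph V) : Prop :=
  ∃ Λ : G.Subgraph, IsSubdivCopy H G Λ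

/-- `Λ` is a `K_{3,3}` subdivision in `G`. -/
def IsK33Sub {V : Type} (G : SimpleGraph V) (Λ : G.Subgraph) : Prop := IsSubdivCopy K33Graph G Λ

/-- `Λ` is a `K_5` subdivision in `G`. -/
def IsK5Sub {V : Type} (G : SimpleGraph V) (Λ : G.Subgraph) : Prop := IsSubdivCopy K5Graph G Λ

/-! ### Essential vertices, branches, bad edges -/

/-- The valence of `v` in the subgraph `Λ`. -/
noncomputable def essDeg {V : Type} {G : SimpleGraph V} (Λ : G.Subgraph) (v : V) : ℕ :=
  (Λ.neighborSet v).ncard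

/-- A vertex is `Λ`-essential if its valence in `Λ` is at least 3. -/
def Essential {V : Type} {G : SimpleGraph V} (Λ : G.Subgraph) (v : V) : Prop := 3 ≤ essDeg Λ v

/-- A vertex is `Λ`-non-essential if its valence in `Λ` is 2. -/
def NonEssential {V : Type} {G : SimpleGraph V} (Λ : G.Subgraph) (v : V) : Prop := essDeg Λ v = 2

/-- A branch of `Λ`: an embedded path in `Λ` between `Λ`-essential vertices whose interior
contains no `Λ`-essential vertex. -/
structure IsBranch {V : Type} {G : SimpleGraph V} (Λ : G.Subgraph) {s t : V}
    (p : G.Walk s t) : Prop where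
  isPath : p.IsPath
  pos : 0 < p.length
  mem_edges : ∀ e ∈ p.edges, e ∈ Λ.edgeSet
  ess_fst : Essential Λ s
  ess_snd : Essential Λ t
  interior : ∀ v ∈ p.support, v ≠ s → v ≠ t → ¬ Essential Λ v

/-- A bad edge of `Λ`: an edge of `G` with both endpoints in `Λ` which is not an edge of `Λ`. -/
def IsBadEdge {V : Type} (G : SimpleGraph V) (Λ : G.Subgraph) (e : Sym2 V) : Prop :=
  e ∈ G.edgeSet ∧ (∀ v ∈ e, v ∈ Λ.verts) ∧ e ∉ Λ.edgeSet

/-- The set of bad edges of `Λ`. -/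
def badEdgeSet {V : Type} (G : SimpleGraph V) (Λ : G.Subgraph) : Set (Sym2 V) :=
  {e | IsBadEdge G Λ e}

/-- `B(Λ)`, the number of bad edges of `Λ`. -/
noncomputable def badCount {V : Type} (G : SimpleGraph V) (Λ : G.Subgraph) : ℕ :=
  (badEdgeSet G Λ).ncard

/-- The number of edges of a subgraph. -/
noncomputable def numEdges {V : Type} {G : SimpleGraph V} (Λ : G.Subgraph) : ℕ :=
  Λ.edgeSet.ncard

/-- `Λ` is a `K_{3,3}` subdivision which is shortest among all `K_{3,3}` subdivisions in `G`
having at most `B(Λ)` bad edges. -/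
def ShortestK33 {V : Type} (G : SimpleGraph V) (Λ : G.Subgraph) : Prop :=
  IsK33Sub G Λ ∧ ∀ Λ₂ : G.Subgraph, IsK33Sub G Λ₂ → badCount G Λ₂ ≤ badCount G Λ →
    numEdges Λ ≤ numEdges Λ₂

/-- A vertex partition `{a,b,c}`, `{x,y,z}` for a `K_{3,3}` subdivision `Λ`: six distinct
vertices which are exactly the `Λ`-essential vertices, with a branch of `Λ` joining each of
`a, b, c` to each of `x, y, z`. -/
structure IsVertexPartition {V : Type} {G : SimpleGraph V} (Λ : G.Subgraph)
    (a b c x y z : V) : Prop where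
  nodup : ([a, b, c, x, y, z] : List V).Nodup
  ess_iff : ∀ v, Essential Λ v ↔ v ∈ ({a, b, c, x, y, z} : Set V)
  branches : ∀ s ∈ ({a, b, c} : Set V), ∀ t ∈ ({x, y, z} : Set V),
    ∃ p : G.Walk s t, IsBranch Λ p

/-- `Λ` is an induced subgraph of `G`. -/
def IsInducedSub {V : Type} (G : SimpleGraph V) (Λ : G.Subgraph) : Prop :=
  ∀ e ∈ G.edgeSet, (∀ v ∈ e, v ∈ Λ.verts) → e ∈ Λ.edgeSet

/-- The induced subgraph on `Λ` consists of `Λ` plus exactly the edges `x-y` and `y-z`. -/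
def FormTwoExtra {V : Type} (G : SimpleGraph V) (Λ : G.Subgraph) (x y z : V) : Prop :=
  badEdgeSet G Λ = {s(x, y), s(y, z)}

/-- The induced subgraph on `Λ` consists of `Λ` plus exactly the edges `x-y`, `y-z`, `a-b`,
`b-c`, and the branches `[a,y]`, `[c,y]`, `[b,x]`, `[b,z]` are single edges. -/
def FormFourExtra {V : Type} (G : SimpleGraph V) (Λ : G.Subgraph) (a b c x y z : V) : Prop :=
  badEdgeSet G Λ = {s(x, y), s(y, z), s(a, b), s(b, c)} ∧
    (∀ p : G.Walk a y, IsBranch Λ p → p.length = 1) ∧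
    (∀ p : G.Walk c y, IsBranch Λ p → p.length = 1) ∧
    (∀ p : G.Walk b x, IsBranch Λ p → p.length = 1) ∧
    (∀ p : G.Walk b z, IsBranch Λ p → p.length = 1)

/-- `Λ` is a `K_{3,3}` subdivision which is either induced, or induces one of the two special
graphs of Dani–Haulmark–Walsh. -/
def GoodK33Outcome {V : Type} (G : SimpleGraph V) (Λ : G.Subgraph) : Prop :=
  IsK33Sub G Λ ∧ (IsInducedSub G Λ ∨
    ∃ a b c x y z : V, IsVertexPartition Λ a b c x y z ∧
      (FormTwoExtra G Λ x y z ∨ FormFourExtra G Λ a b c x y z))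

/-! ### Möbius ladders and separating sets -/

/-- The Möbius ladder `M_n`, on vertex set `ZMod (2 * n)`: the cycle edges `i — i+1`
together with the rungs `i — i+n`. -/
def MobiusLadder (n : ℕ) : SimpleGraph (ZMod (2 * n)) where
  Adj i j := i ≠ j ∧ (i = j + 1 ∨ j = i + 1 ∨ i = j + (n : ZMod (2 * n)))
  symm := by
    constructor
    rintro i j ⟨hne, h⟩
    refine ⟨hne.symm, ?_⟩
    rcases h with h | h | h
    · exact Or.inr (Or.inl h)
    · exact Or.inl h
    · refine Or.inr (Or.inr ?_)
      have hnn : (n : ZMod (2 * n)) + (n : ZMod (2 * n)) = 0 := by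
        have h2 : ((2 * n : ℕ) : ZMod (2 * n)) = 0 := ZMod.natCast_self _
        push_cast at h2
        linear_combination h2
      rw [h, add_assoc, hnn, add_zero]
  loopless := ⟨fun i h => h.1 rfl⟩

/-- `S` separates `G` if deleting `S` yields a disconnected graph. -/
def Separates {V : Type} (G : SimpleGraph V) (S : Set V) : Prop :=
  ¬ (G.induce Sᶜ).Connected

/-!
Sending `v` to the generator of `ZMod 2` and every other vertex `u` to its copy in the first
sheet of `D_vΓ` identifies `W_Γ` with a semidirect product `W_{D_vΓ} ⋊ ZMod 2`, in which
`ZMod 2` acts by the automorphism exchanging the two sheets. The inverse map sends the copy of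
`u` in the second sheet to `v u v`; it respects the relations because `v` commutes with its
link, along which the two sheets are glued. Then `W_{D_vΓ}` is the kernel of the projection
onto `ZMod 2`, a subgroup of index two.
-/

def involutionHom {K : Type*} [Group K] (k : K) (hk : k * k = 1) :
    Multiplicative (ZMod 2) →* K :=
  AddMonoidHom.toMultiplicativeLeft <| ZMod.lift 2
    ⟨zmultiplesHom (Additive K) (Additive.ofMul k), by
      simpa [two_zsmul] using congrArg Additive.ofMul hk⟩

theorem involutionHom_ofAdd_one {K : Type*} [Group K] (k : K) (hk : k * k = 1) :
    involutionHom k hk (.ofAdd 1) = k :=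
  congrArg Additive.toMul <| (ZMod.lift_coe 2 _ 1).trans (one_zsmul _)

theorem zmodTwo_eq_one_or (g : Multiplicative (ZMod 2)) : g = 1 ∨ g = .ofAdd 1 := by
  revert g; decide

theorem SemidirectProduct.commute_inr_inl_of_apply_eq {N Q : Type*} [Group N] [Group Q]
    {φ : Q →* MulAut N} {g : Q} {n : N} (h : φ g n = n) :
    Commute (inr g : N ⋊[φ] Q) (inl n) := by
  ext <;> simp [h]

theorem SemidirectProduct.exists_subgroup_index_eq_card_of_mulEquiv {G N Q : Type*} [Group G]
    [Group N] [Group Q] {φ : Q →* MulAut N} (e : G ≃* N ⋊[φ] Q) :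
    ∃ H : Subgroup G, H.index = Nat.card Q ∧ Nonempty (N ≃* H) := by
  refine ⟨rightHom.ker.comap e.toMonoidHom, ?_, ⟨?_⟩⟩
  · rw [Subgroup.index_comap_of_surjective _ e.surjective, Subgroup.index_ker,
      MonoidHom.range_eq_top.mpr rightHom_surjective, Subgroup.card_top]
  · rw [Subgroup.comap_equiv_eq_map_symm']
    exact ((MonoidHom.ofInjective inl_injective).trans
      (MulEquiv.subgroupCongr range_inl_eq_ker_rightHom)).trans (e.symm.subgroupMap _)

namespace RACG

variable {V : Type} {G : SimpleGraph V}

@[simp]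
theorem of_mul_self (s : V) : (PresentedGroup.of s : RACG G) * PresentedGroup.of s = 1 :=
  (map_mul _ _ _).symm.trans (PresentedGroup.one_of_mem (Or.inl ⟨s, rfl⟩))

theorem of_inv (s : V) : (PresentedGroup.of s : RACG G)⁻¹ = PresentedGroup.of s :=
  inv_eq_of_mul_eq_one_right (of_mul_self s)

@[simp]
theorem of_mul_of_mul_self (s : V) (x : RACG G) :
    PresentedGroup.of s * (PresentedGroup.of s * x) = x := by
  rw [← mul_assoc, of_mul_self, one_mul]

theorem commute_of_adj {s t : V} (h : G.Adj s t) :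
    Commute (PresentedGroup.of s : RACG G) (PresentedGroup.of t) :=
  (map_mul _ _ _).symm.trans <|
    (PresentedGroup.mk_eq_mk_of_mul_inv_mem (Or.inr ⟨s, t, h, rfl⟩)).trans (map_mul _ _ _)

def lift {H : Type*} [Group H] (f : V → H) (hsq : ∀ s, f s * f s = 1)
    (hcomm : ∀ s t, G.Adj s t → Commute (f s) (f t)) : RACG G →* H :=
  PresentedGroup.toGroup (f := f) <| by
    rintro r (⟨s, rfl⟩ | ⟨s, t, hst, rfl⟩)
    · rw [map_mul, FreeGroup.lift_apply_of, hsq]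
    · rw [map_mul, map_inv, map_mul, map_mul, FreeGroup.lift_apply_of, FreeGroup.lift_apply_of,
        mul_inv_eq_one]
      exact hcomm s t hst

@[simp]
theorem lift_of {H : Type*} [Group H] (f : V → H) (hsq) (hcomm) (s : V) :
    lift (G := G) f hsq hcomm (PresentedGroup.of s) = f s :=
  PresentedGroup.toGroup.of _

def map {W : Type} {G' : SimpleGraph W} (f : G →g G') : RACG G →* RACG G' :=
  lift (fun s => PresentedGroup.of (f s)) (fun _ => of_mul_self _)
    (fun _ _ h => commute_of_adj (f.map_adj h))

@[simp]
theorem map_of {W : Type} {G' : SimpleGraph W} (f : G →g G') (s : V) :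
    map f (PresentedGroup.of s) = PresentedGroup.of (f s) :=
  lift_of _ _ _ s

def mapEquiv {W : Type} {G' : SimpleGraph W} (e : G ≃g G') : RACG G ≃* RACG G' :=
  MonoidHom.toMulEquiv (map e.toHom) (map e.symm.toHom)
    (PresentedGroup.ext fun s => by simp)
    (PresentedGroup.ext fun s => by simp)

@[simp]
theorem mapEquiv_of {W : Type} {G' : SimpleGraph W} (e : G ≃g G') (s : V) :
    mapEquiv e (PresentedGroup.of s) = PresentedGroup.of (e s) :=
  map_of _ s

end RACG

namespace DoubleVert

variable {V : Type} {G : SimpleGraph V} {v : V}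

-- The copy of `u` in sheet `b` of the double; a vertex of the link lies in both sheets.
open Classical in
noncomputable def sheet (b : Bool) (u : V) (hu : u ≠ v) : DoubleVert G v :=
  if h : G.Adj v u then .inl ⟨u, h⟩ else .inr (⟨u, hu, h⟩, b)

theorem sheet_of_adj (b : Bool) {u : V} (hu : u ≠ v) (h : G.Adj v u) :
    sheet b u hu = (.inl ⟨u, h⟩ : DoubleVert G v) :=
  dif_pos h

theorem sheet_of_not_adj (b : Bool) {u : V} (hu : u ≠ v) (h : ¬ G.Adj v u) :
    sheet b u hu = (.inr (⟨u, hu, h⟩, b) : DoubleVert G v) :=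
  dif_neg h

theorem exists_eq_sheet (d : DoubleVert G v) : ∃ b u hu, d = sheet b u hu := by
  rcases d with ⟨u, h⟩ | ⟨⟨u, hu, h⟩, b⟩
  · exact ⟨false, u, h.ne', (sheet_of_adj _ _ h).symm⟩
  · exact ⟨b, u, hu, (sheet_of_not_adj _ _ h).symm⟩

def swap : DoubleVert G v → DoubleVert G v :=
  Sum.map id (Prod.map id not)

@[simp]
theorem toV_swap (d : DoubleVert G v) : d.swap.toV = d.toV := by
  rcases d with _ | _ <;> rfl

@[simp]
theorem copy_swap (d : DoubleVert G v) : d.swap.copy = d.copy.map not := by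
  rcases d with _ | _ <;> rfl

theorem swap_involutive : Function.Involutive (swap : DoubleVert G v → DoubleVert G v) := by
  rintro (_ | ⟨_, _ | _⟩) <;> rfl

theorem swap_sheet (b : Bool) {u : V} (hu : u ≠ v) :
    (sheet b u hu : DoubleVert G v).swap = sheet (!b) u hu := by
  by_cases h : G.Adj v u
  · simp only [sheet_of_adj _ hu h]; rfl
  · simp only [sheet_of_not_adj _ hu h]; rfl

end DoubleVert

namespace Double

open DoubleVert

variable {V : Type} (G : SimpleGraph V) (v : V)

def swap : Double G v ≃g Double G v where
  toEquiv := DoubleVert.swap_involutive.toPerm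
  map_rel_iff' := by
    intro a b
    simp [Double, Option.map_injective Bool.not_injective |>.eq_iff]

variable {G v}

theorem adj_sheet (b : Bool) {s t : V} (hs : s ≠ v) (ht : t ≠ v) (h : G.Adj s t) :
    (Double G v).Adj (sheet b s hs) (sheet b t ht) := by
  by_cases hvs : G.Adj v s <;> by_cases hvt : G.Adj v t <;>
    simp [Double, toV, copy, sheet_of_adj, sheet_of_not_adj, hvs, hvt, h]

theorem exists_sheet_of_adj {a c : DoubleVert G v} (h : (Double G v).Adj a c) :
    ∃ b s t hs ht, G.Adj s t ∧ a = sheet b s hs ∧ c = sheet b t ht := by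
  have hst : G.Adj a.toV c.toV := h.1
  rcases a with ⟨s, hs⟩ | ⟨⟨s, hs, hs'⟩, b⟩ <;>
    rcases c with ⟨t, ht⟩ | ⟨⟨t, ht, ht'⟩, b'⟩
  · exact ⟨false, s, t, hs.ne', ht.ne', hst, (sheet_of_adj _ _ hs).symm,
      (sheet_of_adj _ _ ht).symm⟩
  · exact ⟨b', s, t, hs.ne', ht, hst, (sheet_of_adj _ _ hs).symm,
      (sheet_of_not_adj _ _ ht').symm⟩
  · exact ⟨b, s, t, hs, ht.ne', hst, (sheet_of_not_adj _ _ hs').symm,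
      (sheet_of_adj _ _ ht).symm⟩
  · obtain rfl : b = b' := by simpa [Double, copy] using h.2
    exact ⟨b, s, t, hs, ht, hst, (sheet_of_not_adj _ _ hs').symm,
      (sheet_of_not_adj _ _ ht').symm⟩

open PresentedGroup SemidirectProduct

variable (G v)

def swapAut : MulAut (RACG (Double G v)) :=
  RACG.mapEquiv (swap G v)

theorem swapAut_of (d : DoubleVert G v) : swapAut G v (of d) = of d.swap :=
  RACG.mapEquiv_of _ d

theorem swapAut_mul_self : swapAut G v * swapAut G v = 1 :=
  MulEquiv.toMonoidHom_injective <| PresentedGroup.ext fun d => by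
    simp [swapAut_of, swap_involutive d]

def swapAction : Multiplicative (ZMod 2) →* MulAut (RACG (Double G v)) :=
  involutionHom (swapAut G v) (swapAut_mul_self G v)

theorem swapAction_ofAdd_one : swapAction G v (.ofAdd 1) = swapAut G v :=
  involutionHom_ofAdd_one _ _

def toRACGGen (d : DoubleVert G v) : RACG G :=
  if d.copy = some true then of v * of d.toV * of v else of d.toV

variable {G v}

theorem toRACGGen_sheet_false {u : V} (hu : u ≠ v) : toRACGGen G v (sheet false u hu) = of u := by
  by_cases h : G.Adj v u
  · simp [toRACGGen, sheet_of_adj _ hu h, toV, copy]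
  · simp [toRACGGen, sheet_of_not_adj _ hu h, toV, copy]

theorem toRACGGen_sheet_true {u : V} (hu : u ≠ v) :
    toRACGGen G v (sheet true u hu) = of v * of u * of v := by
  by_cases h : G.Adj v u
  · simp [toRACGGen, sheet_of_adj _ hu h, toV, copy, (RACG.commute_of_adj h).eq, mul_assoc]
  · simp [toRACGGen, sheet_of_not_adj _ hu h, toV, copy]

theorem toRACGGen_swap (d : DoubleVert G v) :
    toRACGGen G v d.swap = of v * toRACGGen G v d * of v := by
  obtain ⟨b, u, hu, rfl⟩ := exists_eq_sheet d
  cases b <;> simp [swap_sheet, toRACGGen_sheet_false, toRACGGen_sheet_true, mul_assoc]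

variable (G v)

def toRACG : RACG (Double G v) →* RACG G :=
  RACG.lift (toRACGGen G v)
    (fun d => by
      obtain ⟨b, u, hu, rfl⟩ := exists_eq_sheet d
      cases b <;> simp [toRACGGen_sheet_false, toRACGGen_sheet_true, mul_assoc])
    (fun a c h => by
      obtain ⟨b, s, t, hs, ht, hst, rfl, rfl⟩ := exists_sheet_of_adj h
      cases b
      · simpa only [toRACGGen_sheet_false] using RACG.commute_of_adj hst
      · simpa [toRACGGen_sheet_true, RACG.of_inv] using
          (RACG.commute_of_adj hst).map (MulAut.conj (of v : RACG G)))

variable {G v}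

theorem sheet_swapAction (b : Bool) {u : V} (hu : u ≠ v) :
    swapAction G v (.ofAdd 1) (of (sheet b u hu)) = of (sheet (!b) u hu) := by
  rw [swapAction_ofAdd_one, swapAut_of, swap_sheet]

theorem commute_inr_inl_sheet_of_adj {u : V} (hu : u ≠ v) (h : G.Adj v u) :
    Commute (inr (.ofAdd 1) : RACG (Double G v) ⋊[swapAction G v] _)
      (inl (of (sheet false u hu))) :=
  commute_inr_inl_of_apply_eq <| by
    rw [sheet_swapAction, sheet_of_adj _ hu h, sheet_of_adj _ hu h]

variable (G v)

open Classical in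
noncomputable def toSemidirectGen (s : V) :
    RACG (Double G v) ⋊[swapAction G v] Multiplicative (ZMod 2) :=
  if h : s = v then inr (.ofAdd 1) else inl (of (sheet false s h))

noncomputable def toSemidirect :
    RACG G →* RACG (Double G v) ⋊[swapAction G v] Multiplicative (ZMod 2) :=
  RACG.lift (toSemidirectGen G v)
    (fun s => by
      by_cases hs : s = v
      · simp only [toSemidirectGen, dif_pos hs, ← map_mul]
        rfl
      · simp only [toSemidirectGen, dif_neg hs, ← map_mul, RACG.of_mul_self, map_one])
    (fun s t hst => by
      by_cases hs : s = v <;> by_cases ht : t = v <;>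
        simp only [toSemidirectGen, hs, ht, dite_true, dite_false]
      · subst hs ht; exact absurd hst (G.loopless.irrefl _)
      · subst hs; exact commute_inr_inl_sheet_of_adj ht hst
      · subst ht; exact (commute_inr_inl_sheet_of_adj hs hst.symm).symm
      · exact (RACG.commute_of_adj (adj_sheet false hs ht hst)).map inl)

variable {G v}

theorem toSemidirect_of_self : toSemidirect G v (of v) = inr (.ofAdd 1) := by
  simp [toSemidirect, toSemidirectGen]

theorem toSemidirect_of_ne {s : V} (hs : s ≠ v) :
    toSemidirect G v (of s) = inl (of (sheet false s hs)) := by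
  simp [toSemidirect, toSemidirectGen, hs]

variable (G v)

def ofSemidirect : RACG (Double G v) ⋊[swapAction G v] Multiplicative (ZMod 2) →* RACG G :=
  SemidirectProduct.lift (toRACG G v) (involutionHom (of v) (RACG.of_mul_self v)) fun g => by
    obtain rfl | rfl := zmodTwo_eq_one_or g
    · ext; simp
    · refine PresentedGroup.ext fun d => ?_
      simp [swapAction_ofAdd_one, swapAut_of, involutionHom_ofAdd_one, toRACG, toRACGGen_swap,
        RACG.of_inv]

theorem ofSemidirect_comp_toSemidirect :
    (ofSemidirect G v).comp (toSemidirect G v) = MonoidHom.id _ :=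
  PresentedGroup.ext fun s => by
    by_cases hs : s = v
    · subst hs
      simp [toSemidirect_of_self, ofSemidirect, involutionHom_ofAdd_one]
    · simp [toSemidirect_of_ne hs, ofSemidirect, toRACG, toRACGGen_sheet_false]

theorem toSemidirect_comp_ofSemidirect :
    (toSemidirect G v).comp (ofSemidirect G v) = MonoidHom.id _ := by
  refine SemidirectProduct.hom_ext (PresentedGroup.ext fun d => ?_) (MonoidHom.ext fun g => ?_)
  · obtain ⟨b, u, hu, rfl⟩ := exists_eq_sheet d
    cases b
    · simp [ofSemidirect, toRACG, toRACGGen_sheet_false, toSemidirect_of_ne hu]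
    · have inv_ofAdd_one : (Multiplicative.ofAdd 1 : Multiplicative (ZMod 2))⁻¹ = .ofAdd 1 := by
        decide
      simp only [MonoidHom.comp_apply, ofSemidirect, lift_inl, toRACG, RACG.lift_of,
        toRACGGen_sheet_true, map_mul, toSemidirect_of_self, toSemidirect_of_ne hu]
      have := inl_aut (φ := swapAction G v) (.ofAdd 1) (of (sheet false u hu))
      rw [inv_ofAdd_one, sheet_swapAction] at this
      exact this.symm
  · obtain rfl | rfl := zmodTwo_eq_one_or g
    · simp
    · simp [ofSemidirect, involutionHom_ofAdd_one, toSemidirect_of_self]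

noncomputable def racgEquivSemidirect :
    RACG G ≃* RACG (Double G v) ⋊[swapAction G v] Multiplicative (ZMod 2) :=
  MonoidHom.toMulEquiv (toSemidirect G v) (ofSemidirect G v)
    (ofSemidirect_comp_toSemidirect G v) (toSemidirect_comp_ofSemidirect G v)

end Double

theorem racg_double_is_index_two_subgroup_general {V : Type} (G : SimpleGraph V) (v : V) :
    ∃ H : Subgroup (RACG G), H.index = 2 ∧ Nonempty (RACG (Double G v) ≃* H) := by
  simpa using SemidirectProduct.exists_subgroup_index_eq_card_of_mulEquiv
    (Double.racgEquivSemidirect G v)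

/-- Doubling Lemma: for a finite simple graph `Γ` and a vertex `v`, the
right-angled Coxeter group of the double `D_vΓ` is isomorphic to an index-two subgroup of
the right-angled Coxeter group of `Γ`. -/
theorem racg_double_is_index_two_subgroup {V : Type} [Finite V] (G : SimpleGraph V) (v : V) :
    ∃ H : Subgroup (RACG G), H.index = 2 ∧ Nonempty (RACG (Double G v) ≃* H) :=
  racg_double_is_index_two_subgroup_general G v
end

section
/- Let Γ be a triangle-free finite simple graph and let Λ ⊆ Γ be a K_5 subdivision. Then there exist Λ-essential vertices a, b, c such that the branches [a,b] and [a,c] of Λ both have length at least 2 (i.e., are subdivided). -/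
open SimpleGraph

/-!
Subdividing edges keeps five vertices of valence at least 3 pairwise joined through vertices
of valence 2, so `Λ` has five essential vertices joined pairwise by branches. A branch of
length 1 is an edge of `Γ`, hence triangle-freeness puts a subdivided branch inside every triple
of them. Five vertices with that property always include one vertex incident to two subdivided
branches: if `[a,b]` is subdivided and no other branch at `a` is, then for the other three
vertices `c, d, e` the triples `{a,c,d}` and `{a,c,e}` force `[c,d]` and `[c,e]`.
-/

section subdivideEdge

variable {V : Type} {G : SimpleGraph V} {u w : V}

lemma subdivideEdge_adj_some_some {a b : V} :
    (subdivideEdge G u w).Adj (some a) (some b) ↔ G.Adj a b ∧ s(a, b) ≠ s(u, w) := by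
  change G.Adj a b ∧ ¬(a = u ∧ b = w) ∧ ¬(a = w ∧ b = u) ↔ _
  rw [ne_eq, Sym2.eq_iff]
  tauto

lemma subdivideEdge_adj_some_none {a : V} :
    (subdivideEdge G u w).Adj (some a) none ↔ a ∈ s(u, w) :=
  Sym2.mem_iff.symm

lemma subdivideEdge_neighborSet_none :
    (subdivideEdge G u w).neighborSet none = {some u, some w} := by
  ext (_ | x)
  · simp [subdivideEdge]
  · simp [(subdivideEdge G u w).adj_comm none, subdivideEdge_adj_some_none]

lemma ncard_subdivideEdge_neighborSet_none (huw : u ≠ w) :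
    ((subdivideEdge G u w).neighborSet none).ncard = 2 := by
  rw [subdivideEdge_neighborSet_none, Set.ncard_pair (by simpa using huw)]

lemma ncard_subdivideEdge_neighborSet_some (huw : G.Adj u w) (v : V) :
    ((subdivideEdge G u w).neighborSet (some v)).ncard = (G.neighborSet v).ncard := by
  classical
  symm
  refine Set.ncard_congr (fun x _ => if s(v, x) = s(u, w) then none else some x) ?_ ?_ ?_
  · intro x hx
    split_ifs with h
    · exact subdivideEdge_adj_some_none (G := G).mpr (h ▸ Sym2.mem_mk_left v x)
    · exact subdivideEdge_adj_some_some.mpr ⟨hx, h⟩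
  · intro x y _ _ hxy
    split_ifs at hxy with hx hy hy
    · exact Sym2.congr_right.mp (hx.trans hy.symm)
    · exact Option.some_injective _ hxy
  · rintro (_ | x) hx
    · obtain rfl | rfl := Sym2.mem_iff.mp (subdivideEdge_adj_some_none (G := G).mp hx)
      · exact ⟨w, huw, if_pos rfl⟩
      · exact ⟨u, huw.symm, if_pos Sym2.eq_swap⟩
    · obtain ⟨hadj, hne⟩ := subdivideEdge_adj_some_some.mp hx
      exact ⟨x, hadj, if_neg hne⟩

lemma exists_subdivideEdge_walk_of_adj {a b : V} (hab : G.Adj a b) :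
    ∃ q : (subdivideEdge G u w).Walk (some a) (some b),
      ∀ x, some x ∈ q.support → x = a ∨ x = b := by
  by_cases h : s(a, b) = s(u, w)
  · have ha : (subdivideEdge G u w).Adj (some a) none :=
      subdivideEdge_adj_some_none.mpr (h ▸ Sym2.mem_mk_left a b)
    have hb : (subdivideEdge G u w).Adj none (some b) :=
      (subdivideEdge_adj_some_none.mpr (h ▸ Sym2.mem_mk_right a b)).symm
    exact ⟨.cons ha (.cons hb .nil), by simp⟩
  · exact ⟨.cons (subdivideEdge_adj_some_some.mpr ⟨hab, h⟩) .nil, by simp⟩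

lemma exists_subdivideEdge_walk {a b : V} (p : G.Walk a b) :
    ∃ q : (subdivideEdge G u w).Walk (some a) (some b),
      ∀ x, some x ∈ q.support → x ∈ p.support := by
  induction p with
  | nil => exact ⟨.nil, by simp⟩
  | cons hab p ih =>
    obtain ⟨q₁, hq₁⟩ := exists_subdivideEdge_walk_of_adj (u := u) (w := w) hab
    obtain ⟨q₂, hq₂⟩ := ih
    refine ⟨q₁.append q₂, fun x hx => ?_⟩
    rcases (Walk.mem_support_append_iff q₁ q₂).mp hx with hx | hx
    · rcases hq₁ x hx with rfl | rfl <;> simp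
    · exact List.mem_cons_of_mem _ (hq₂ x hx)

end subdivideEdge

/-- `β` marks the branch vertices of a subdivided complete graph on `ι`, recording only what
survives subdivision: walks instead of paths (`Walk.bypass` recovers paths) and bounds on
valences instead of exact values. -/
structure CompleteSubdivFrame {ι W : Type*} (H : SimpleGraph W) (β : ι → W) : Prop where
  injective : Function.Injective β
  three_le_ncard_neighborSet : ∀ i, 3 ≤ (H.neighborSet (β i)).ncard
  exists_walk : ∀ i j, i ≠ j → ∃ p : H.Walk (β i) (β j),
    ∀ v ∈ p.support, v ≠ β i → v ≠ β j → (H.neighborSet v).ncard ≤ 2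

lemma ncard_coe_neighborSet_eq_essDeg {V : Type} {G : SimpleGraph V} {Λ : G.Subgraph}
    (v : Λ.verts) : (Λ.coe.neighborSet v).ncard = essDeg Λ v :=
  Set.ncard_congr' (Subgraph.coeNeighborSetEquiv v)

lemma completeSubdivFrame_completeGraph {ι : Type*} [Finite ι] (hι : 4 ≤ Nat.card ι) :
    CompleteSubdivFrame (completeGraph ι) id where
  injective := Function.injective_id
  three_le_ncard_neighborSet i := by
    rw [id, neighborSet_top, Set.ncard_compl, Set.ncard_singleton]
    omega
  exists_walk i j hij := ⟨.cons hij .nil, by simp +contextual⟩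

namespace CompleteSubdivFrame

variable {ι : Type*}

lemma map {W W' : Type*} {H : SimpleGraph W} {H' : SimpleGraph W'} {β : ι → W}
    (hβ : CompleteSubdivFrame H β) (f : H ≃g H') : CompleteSubdivFrame H' (f ∘ β) where
  injective := f.injective.comp hβ.injective
  three_le_ncard_neighborSet i :=
    Set.ncard_congr' (f.mapNeighborSet (β i)) ▸ hβ.three_le_ncard_neighborSet i
  exists_walk i j hij := by
    obtain ⟨p, hp⟩ := hβ.exists_walk i j hij
    refine ⟨p.map f.toHom, fun v hv hvi hvj => ?_⟩
    obtain ⟨x, hx, rfl⟩ := List.mem_map.mp (Walk.support_map _ p ▸ hv)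
    change (H'.neighborSet (f x)).ncard ≤ 2
    rw [← Set.ncard_congr' (f.mapNeighborSet x)]
    exact hp x hx (fun h => hvi (h ▸ rfl)) (fun h => hvj (h ▸ rfl))

lemma subdivide {V : Type} {G : SimpleGraph V} {u w : V} {β : ι → V}
    (hβ : CompleteSubdivFrame G β) (huw : G.Adj u w) :
    CompleteSubdivFrame (subdivideEdge G u w) (some ∘ β) where
  injective := Option.some_injective _ |>.comp hβ.injective
  three_le_ncard_neighborSet i :=
    (ncard_subdivideEdge_neighborSet_some huw (β i)).symm ▸ hβ.three_le_ncard_neighborSet i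
  exists_walk i j hij := by
    obtain ⟨p, hp⟩ := hβ.exists_walk i j hij
    obtain ⟨q, hq⟩ := exists_subdivideEdge_walk (u := u) (w := w) p
    refine ⟨q, fun v hv hvi hvj => ?_⟩
    cases v with
    | none => exact (ncard_subdivideEdge_neighborSet_none huw.ne).le
    | some x =>
      rw [ncard_subdivideEdge_neighborSet_some huw]
      exact hp x (hq x hv) (fun h => hvi (h ▸ rfl)) (fun h => hvj (h ▸ rfl))

lemma exists_of_isSubdivisionOf {H₀ H : FinGraph} (h : IsSubdivisionOf H₀ H) {β : ι → H₀.V}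
    (hβ : CompleteSubdivFrame H₀.graph β) : ∃ β' : ι → H.V, CompleteSubdivFrame H.graph β' := by
  induction h with
  | refl => exact ⟨β, hβ⟩
  | tail _ hstep ih =>
    obtain ⟨β', hβ'⟩ := ih
    obtain ⟨u, w, huw, ⟨e⟩⟩ := hstep
    exact ⟨_, (hβ'.subdivide huw).map e.symm⟩

section Subgraph

variable {V : Type} {G : SimpleGraph V} {Λ : G.Subgraph} {β : ι → Λ.verts}

lemma essential (hβ : CompleteSubdivFrame Λ.coe β) (i : ι) : Essential Λ (β i) :=
  show 3 ≤ essDeg Λ (β i) from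
    ncard_coe_neighborSet_eq_essDeg (β i) ▸ hβ.three_le_ncard_neighborSet i

lemma exists_isBranch (hβ : CompleteSubdivFrame Λ.coe β) {i j : ι} (hij : i ≠ j) :
    ∃ p : G.Walk (β i) (β j), IsBranch Λ p := by
  classical
  obtain ⟨p, hp⟩ := hβ.exists_walk i j hij
  have hne : (β i : V) ≠ β j := Subtype.val_injective.ne (hβ.injective.ne hij)
  refine ⟨(p.map Λ.hom).bypass, Walk.bypass_isPath _,
    Nat.pos_of_ne_zero fun h => hne (Walk.eq_of_length_eq_zero h), fun e he => ?_,
    hβ.essential i, hβ.essential j, fun v hv hvi hvj => ?_⟩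
  · obtain ⟨e', he', rfl⟩ :=
      List.mem_map.mp (Walk.edges_map _ p ▸ Walk.edges_bypass_subset_edges _ he)
    have := p.edges_subset_edgeSet he'
    rwa [Subgraph.edgeSet_coe] at this
  · obtain ⟨x, hx, rfl⟩ :=
      List.mem_map.mp (Walk.support_map _ p ▸ Walk.support_bypass_subset_support _ hv)
    have := ncard_coe_neighborSet_eq_essDeg x ▸
      hp x hx (fun h => hvi (h ▸ rfl)) (fun h => hvj (h ▸ rfl))
    change ¬ 3 ≤ essDeg Λ x
    omega

end Subgraph

end CompleteSubdivFrame

lemma exists_rel_rel_of_rel_of_nodup {α : Type*} {m : α → α → Prop}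
    (htri : ∀ i j k, i ≠ j → i ≠ k → j ≠ k → m i j ∨ m i k ∨ m j k)
    {a b c d e : α} (hnd : [a, b, c, d, e].Nodup) (hab : m a b) :
    ∃ x y z, x ≠ y ∧ x ≠ z ∧ y ≠ z ∧ m x y ∧ m x z := by
  simp only [List.nodup_cons, List.mem_cons, List.not_mem_nil, not_or, or_false] at hnd
  obtain ⟨⟨hab', hac', had', hae'⟩, ⟨hbc', hbd', hbe'⟩, ⟨hcd', hce'⟩, hde', -⟩ := hnd
  by_cases hac : m a c
  · exact ⟨a, b, c, hab', hac', hbc', hab, hac⟩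
  by_cases had : m a d
  · exact ⟨a, b, d, hab', had', hbd', hab, had⟩
  by_cases hae : m a e
  · exact ⟨a, b, e, hab', hae', hbe', hab, hae⟩
  have hcd := ((htri a c d hac' had' hcd').resolve_left hac).resolve_left had
  have hce := ((htri a c e hac' hae' hce').resolve_left hac).resolve_left hae
  exact ⟨c, d, e, hcd', hce', hde', hcd, hce⟩

lemma exists_rel_rel_of_forall_triple {m : Fin 5 → Fin 5 → Prop}
    (htri : ∀ i j k, i ≠ j → i ≠ k → j ≠ k → m i j ∨ m i k ∨ m j k) :
    ∃ a b c, a ≠ b ∧ a ≠ c ∧ b ≠ c ∧ m a b ∧ m a c := by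
  rcases htri 0 1 2 (by decide) (by decide) (by decide) with h | h | h
  · exact exists_rel_rel_of_rel_of_nodup htri (c := 2) (d := 3) (e := 4) (by decide) h
  · exact exists_rel_rel_of_rel_of_nodup htri (c := 1) (d := 3) (e := 4) (by decide) h
  · exact exists_rel_rel_of_rel_of_nodup htri (c := 0) (d := 3) (e := 4) (by decide) h

theorem k5_has_two_subdivided_branches_general {V : Type} (G : SimpleGraph V)
    (htf : G.CliqueFree 3) (Λ : G.Subgraph) (hΛ : IsK5Sub G Λ) :
    ∃ a b c : V, a ≠ b ∧ a ≠ c ∧ b ≠ c ∧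
      Essential Λ a ∧ Essential Λ b ∧ Essential Λ c ∧
      (∃ p : G.Walk a b, IsBranch Λ p ∧ 2 ≤ p.length) ∧
      (∃ q : G.Walk a c, IsBranch Λ q ∧ 2 ≤ q.length) := by
  classical
  obtain ⟨H, hsub, ⟨e⟩⟩ := hΛ
  obtain ⟨β, hβ⟩ :=
    (completeSubdivFrame_completeGraph (ι := Fin 5) (by simp)).exists_of_isSubdivisionOf hsub
  have hβΛ := hβ.map e
  let Subdivided (i j : Fin 5) : Prop :=
    ∃ p : G.Walk (e (β i)) (e (β j)), IsBranch Λ p ∧ 2 ≤ p.length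
  have adj_of_not_subdivided {i j : Fin 5} (hij : i ≠ j) (h : ¬ Subdivided i j) :
      G.Adj (e (β i)) (e (β j)) := by
    obtain ⟨p, hp⟩ := hβΛ.exists_isBranch hij
    have := hp.pos
    exact Walk.adj_of_length_eq_one (p := p) (by_contra fun h1 => h ⟨p, hp, by omega⟩)
  have htri : ∀ i j k, i ≠ j → i ≠ k → j ≠ k →
      Subdivided i j ∨ Subdivided i k ∨ Subdivided j k := by
    intro i j k hij hik hjk
    by_contra! h
    exact htf _ (is3Clique_triple_iff.mpr ⟨adj_of_not_subdivided hij h.1,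
      adj_of_not_subdivided hik h.2.1, adj_of_not_subdivided hjk h.2.2⟩)
  obtain ⟨a, b, c, hab, hac, hbc, hsab, hsac⟩ := exists_rel_rel_of_forall_triple htri
  have hinj := Subtype.val_injective.comp hβΛ.injective
  exact ⟨_, _, _, hinj.ne hab, hinj.ne hac, hinj.ne hbc,
    hβΛ.essential a, hβΛ.essential b, hβΛ.essential c, hsab, hsac⟩

/-- in a triangle-free finite simple graph, any `K_5` subdivision `Λ` has
essential vertices `a, b, c` such that the branches `[a,b]` and `[a,c]` are both subdivided
(have length at least 2). -/
theorem k5_has_two_subdivided_branches {V : Type} [Finite V] (G : SimpleGraph V)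
    (htf : G.CliqueFree 3) (Λ : G.Subgraph) (hΛ : IsK5Sub G Λ) :
    ∃ a b c : V, a ≠ b ∧ a ≠ c ∧ b ≠ c ∧
      Essential Λ a ∧ Essential Λ b ∧ Essential Λ c ∧
      (∃ p : G.Walk a b, IsBranch Λ p ∧ 2 ≤ p.length) ∧
      (∃ q : G.Walk a c, IsBranch Λ q ∧ 2 ≤ q.length) :=
  k5_has_two_subdivided_branches_general G htf Λ hΛ
end
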